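/- Let F : C → D be a full and essentially surjective k-linear functor between essentially small k-linear tensor categories with F a tensor functor and C rigid. Then every k-linear functor M : C → Mod_k admits at most one structure of module over the monoid A = F*(𝟙_{Rep D}) in the Day convolution tensor category Fun_k(C, Mod_k). -/

import Mathlib

/-!
Statement 10: Let `F : C ⥤ D` be a full and essentially surjective `k`-linear tensor
functor between essentially small `k`-linear tensor categories, with `C` rigid.  Then every
`k`-linear functor `M : C ⥤ Mod_k` admits at most one structure of module over the
commutative monoid `A = F*(𝟙_{Rep D}) = D(𝟙, F−)` in the Day convolution tensor category
`Fun_k(C, Mod_k)`.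

Pointwise, `(A ⊗_C M)(c) = ∫^{(u,v) ∈ C×C} C(u ⊗ v, c) ⊗ D(𝟙, Fu) ⊗ M(v)` (a `k`-linear
coend, computed as a quotient of a direct sum via the unbundled `CoendData` below).  An
`A`-module structure on `M` is a natural `k`-linear map `ρ : A ⊗_C M ⟶ M` satisfying the
unit and associativity axioms; these are expressed below on generators of the coends.
-/

open CategoryTheory TensorProduct DirectSum MonoidalCategory

universe u

variable (k : Type u) [CommRing k]

/-- Unbundled data for a `k`-linear coend `∫^{c ∈ E} H(c,c)`. -/
structure CoendData (E : Type u) [Category.{u} E] : Type (u + 1) where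
  obj : E → E → ModuleCat.{u} k
  left : ∀ {c c' : E} (d : E), (c' ⟶ c) → (obj c d →ₗ[k] obj c' d)
  right : ∀ (c : E) {d d' : E}, (d ⟶ d') → (obj c d →ₗ[k] obj c d')

variable {k} {E : Type u} [Category.{u} E]

/-- The submodule of relations defining the coend. -/
noncomputable def CoendData.relations (H : CoendData k E) :
    Submodule k (⨁ c : E, (H.obj c c : Type u)) :=
  letI := Classical.decEq E
  Submodule.span k {z | ∃ (c c' : E) (α : c' ⟶ c) (y : H.obj c c'),
    z = DirectSum.lof k E (fun c => (H.obj c c : Type u)) c' (H.left c' α y)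
      - DirectSum.lof k E (fun c => (H.obj c c : Type u)) c (H.right c α y)}

/-- The `k`-linear coend `∫^{c} H(c,c)`. -/
noncomputable def CoendData.Coend (H : CoendData k E) : Type u :=
  (⨁ c : E, (H.obj c c : Type u)) ⧸ H.relations

noncomputable instance (H : CoendData k E) : AddCommGroup H.Coend :=
  inferInstanceAs (AddCommGroup ((⨁ c : E, (H.obj c c : Type u)) ⧸ H.relations))

noncomputable instance (H : CoendData k E) : Module k H.Coend :=
  inferInstanceAs (Module k ((⨁ c : E, (H.obj c c : Type u)) ⧸ H.relations))

/-- The generator `[x]_c` of the coend. -/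
noncomputable def CoendData.gen (H : CoendData k E) (c : E) (x : H.obj c c) : H.Coend :=
  letI := Classical.decEq E
  Submodule.Quotient.mk (DirectSum.lof k E (fun c => (H.obj c c : Type u)) c x)

section Unique

variable (k)
variable {C D : Type u} [Category.{u} C] [Category.{u} D]
  [Preadditive C] [Linear k C] [MonoidalCategory C] [SymmetricCategory C]
  [MonoidalPreadditive C] [MonoidalLinear k C] [RigidCategory C]
  [Preadditive D] [Linear k D] [MonoidalCategory D] [SymmetricCategory D]
  [MonoidalPreadditive D] [MonoidalLinear k D]
  (F : C ⥤ D) [F.Additive] [F.Linear k] [F.Monoidal]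

/-- Coend data computing `(A ⊗_C M)(c) = ∫^{(u,v)} C(u ⊗ v, c) ⊗ D(𝟙, Fu) ⊗ M(v)`,
where `A = F*(𝟙_{Rep D}) = D(𝟙, F−)`. -/
noncomputable def AMData (M : C ⥤ ModuleCat.{u} k) (c : C) : CoendData k (C × C) where
  obj p q := ModuleCat.of k
    (((p.1 ⊗ p.2 : C) ⟶ c) ⊗[k]
      (((𝟙_ D ⟶ F.obj q.1) : Type u) ⊗[k] (M.obj q.2 : Type u)))
  left q φ := TensorProduct.map (Linear.leftComp k c (φ.1 ⊗ₘ φ.2)) LinearMap.id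
  right p {q q'} ψ := TensorProduct.map LinearMap.id
    (TensorProduct.map (Linear.rightComp k (𝟙_ D) (F.map ψ.1)) (M.map ψ.2).hom)

/-- The generator `[g, a, m]_{(u,v)}` of `(A ⊗_C M)(c)`. -/
noncomputable def amGen (M : C ⥤ ModuleCat.{u} k) {c : C} (u v : C)
    (g : (u ⊗ v : C) ⟶ c) (a : 𝟙_ D ⟶ F.obj u) (m : M.obj v) :
    (AMData k F M c).Coend :=
  (AMData k F M c).gen (u, v)
    (show (((u ⊗ v : C) ⟶ c) ⊗[k]
        (((𝟙_ D ⟶ F.obj u) : Type u) ⊗[k] (M.obj v : Type u))) from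
      g ⊗ₜ (a ⊗ₜ m))

/-- `ρ` is an `A`-module structure on `M`: a natural family of `k`-linear maps
`ρ_c : (A ⊗_C M)(c) ⟶ M(c)` which is unital and associative (expressed on generators). -/
def IsAModuleStructure (M : C ⥤ ModuleCat.{u} k)
    (ρ : ∀ c : C, (AMData k F M c).Coend →ₗ[k] M.obj c) : Prop :=
  -- naturality in `c`
  (∀ (c c' : C) (f : c ⟶ c') (u v : C) (g : (u ⊗ v : C) ⟶ c)
      (a : 𝟙_ D ⟶ F.obj u) (m : M.obj v),
    ρ c' (amGen k F M u v (g ≫ f) a m) = M.map f (ρ c (amGen k F M u v g a m))) ∧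
  -- unit axiom (the unit of `A` is induced by the unit `ε : 𝟙_D ⟶ F(𝟙_C)` of `F`)
  (∀ (c : C) (m : M.obj c),
    ρ c (amGen k F M (𝟙_ C) c (λ_ c).hom (Functor.LaxMonoidal.ε F) m) = m) ∧
  -- associativity axiom (the multiplication of `A` is induced by the lax structure of
  -- `F*`, i.e. by `a · a' = (λ_𝟙)⁻¹ ≫ (a ⊗ a') ≫ μ_{u,u'}`)
  (∀ (u u' v' c : C) (g : (u ⊗ (u' ⊗ v') : C) ⟶ c)
      (a : 𝟙_ D ⟶ F.obj u) (a' : 𝟙_ D ⟶ F.obj u') (m : M.obj v'),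
    ρ c (amGen k F M u (u' ⊗ v') g a
        (ρ (u' ⊗ v') (amGen k F M u' v' (𝟙 (u' ⊗ v')) a' m))) =
      ρ c (amGen k F M (u ⊗ u') v' ((α_ u u' v').hom ≫ g)
        ((λ_ (𝟙_ D)).inv ≫ (a ⊗ₘ a') ≫ Functor.LaxMonoidal.μ F u u') m))

end Unique

/-!
Fullness of `F` writes every `a : 𝟙 ⟶ F u` as `ε ≫ F.map b` with `b : 𝟙 ⟶ u`. The coend
relation moves `b` from the `A`-factor into the `C(u ⊗ v, c)`-factor, so every generator
`[g, a, m]` equals a generator `[g', ε, m]` carrying the unit of `A`, on which naturality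
and the unit axiom force `ρ [g', ε, m] = M(λ⁻¹ ≫ g') m`.
-/

namespace CoendData

variable (H : CoendData k E)

noncomputable def ι (c : E) : H.obj c c →ₗ[k] H.Coend :=
  letI := Classical.decEq E
  H.relations.mkQ ∘ₗ DirectSum.lof k E (fun c => (H.obj c c : Type u)) c

theorem gen_left_eq_gen_right {c c' : E} (α : c' ⟶ c) (y : H.obj c c') :
    H.gen c' (H.left c' α y) = H.gen c (H.right c α y) := by
  let := Classical.decEq E
  exact (Submodule.Quotient.eq _).2 (Submodule.subset_span ⟨c, c', α, y, rfl⟩)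

theorem hom_ext {N : Type u} [AddCommGroup N] [Module k N] {f f' : H.Coend →ₗ[k] N}
    (h : ∀ c, f ∘ₗ H.ι c = f' ∘ₗ H.ι c) : f = f' := by
  let := Classical.decEq E
  exact Submodule.linearMap_qext _ (DirectSum.linearMap_ext _ h)

end CoendData

section Generators

variable {C D : Type u} [Category.{u} C] [Category.{u} D]
  [Preadditive C] [Linear k C] [MonoidalCategory C]
  [Preadditive D] [Linear k D] [MonoidalCategory D]
  {F : C ⥤ D} {M : C ⥤ ModuleCat.{u} k}

theorem AMData.hom_ext {c : C} {N : Type u} [AddCommGroup N] [Module k N]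
    {f f' : (AMData k F M c).Coend →ₗ[k] N}
    (h : ∀ u v g a m, f (amGen k F M u v g a m) = f' (amGen k F M u v g a m)) : f = f' :=
  CoendData.hom_ext _ fun _ => TensorProduct.ext_threefold' fun g a m => h _ _ g a m

/-- The coend relation for the morphism `(b, 𝟙 v) : (u', v) ⟶ (u, v)` of `C × C`. -/
theorem amGen_comp_map {c u u' : C} (v : C) (b : u' ⟶ u) (g : (u ⊗ v : C) ⟶ c)
    (a : 𝟙_ D ⟶ F.obj u') (m : M.obj v) :
    amGen k F M u v g (a ≫ F.map b) m = amGen k F M u' v (b ▷ v ≫ g) a m := by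
  have h := (AMData k F M c).gen_left_eq_gen_right (c := (u, v)) (c' := (u', v)) (b, 𝟙 v)
    (g ⊗ₜ (a ⊗ₜ m))
  simp only [AMData, M.map_id, tensorHom_id] at h
  exact h.symm

theorem apply_amGen_ε_comp_map [F.Monoidal]
    {ρ : ∀ c : C, (AMData k F M c).Coend →ₗ[k] M.obj c} (hρ : IsAModuleStructure k F M ρ)
    {c u : C} (v : C) (b : 𝟙_ C ⟶ u) (g : (u ⊗ v : C) ⟶ c) (m : M.obj v) :
    ρ c (amGen k F M u v g (Functor.LaxMonoidal.ε F ≫ F.map b) m) =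
      M.map ((λ_ v).inv ≫ b ▷ v ≫ g) m := by
  obtain ⟨hnat, hunit, -⟩ := hρ
  have hg : b ▷ v ≫ g = (λ_ v).hom ≫ (λ_ v).inv ≫ b ▷ v ≫ g := by simp
  rw [amGen_comp_map, hg, hnat, hunit, Iso.inv_hom_id_assoc]

end Generators

section Unique

variable (k)
variable {C D : Type u} [Category.{u} C] [Category.{u} D]
  [Preadditive C] [Linear k C] [MonoidalCategory C] [SymmetricCategory C]
  [MonoidalPreadditive C] [MonoidalLinear k C] [RigidCategory C]
  [Preadditive D] [Linear k D] [MonoidalCategory D] [SymmetricCategory D]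
  [MonoidalPreadditive D] [MonoidalLinear k D]
  (F : C ⥤ D) [F.Additive] [F.Linear k] [F.Monoidal]

theorem amodule_structure_unique (hFull : F.Full)
    (M : C ⥤ ModuleCat.{u} k)
    (ρ ρ' : ∀ c : C, (AMData k F M c).Coend →ₗ[k] M.obj c)
    (hρ : IsAModuleStructure k F M ρ) (hρ' : IsAModuleStructure k F M ρ') :
    ρ = ρ' := by
  funext c
  refine AMData.hom_ext fun u v g a m => ?_
  obtain ⟨b, rfl⟩ : ∃ b, a = Functor.LaxMonoidal.ε F ≫ F.map b :=
    ⟨F.preimage (inv (Functor.LaxMonoidal.ε F) ≫ a), by simp⟩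
  rw [apply_amGen_ε_comp_map hρ, apply_amGen_ε_comp_map hρ']

end Unique
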